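/- Let Σ be n×n symmetric positive definite, and for conditioning sets c(i) ⊆ {1,…,i−1}, define the matrix V column by column via V_{c̄(i), i} = u_i · (u_{i,1})^{−1/2} with u_i = (Σ_{c̄(i),c̄(i)})⁻¹ e₁, c̄(i) = (i, c(i)), and V_{j,i} = 0 for j ∉ c̄(i). Then V is upper triangular with positive diagonal entries, and the matrix Σ_V := (V Vᵀ)⁻¹ is symmetric positive definite. -/

import Mathlib

open Matrix Finset

/-- The Vecchia inverse-Cholesky factor, built column by column:
column `i` is supported on the ordered index set `c̄(i)` (enumerated by `ι i`, whose
first element is `i`), with entries `V_{c̄(i), i} = u_i · (u_{i,1})^{−1/2}` where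
`u_i = (Σ_{c̄(i),c̄(i)})⁻¹ e₁`, and zeros elsewhere. -/
noncomputable def vecchiaFactor {n : ℕ} (S : Matrix (Fin n) (Fin n) ℝ) (k : Fin n → ℕ)
    (ι : (i : Fin n) → Fin (k i + 1) → Fin n) : Matrix (Fin n) (Fin n) ℝ :=
  fun j i =>
    ∑ m : Fin (k i + 1),
      if ι i m = j then
        (((S.submatrix (ι i) (ι i))⁻¹).mulVec (Pi.single 0 1)) m *
          ((((S.submatrix (ι i) (ι i))⁻¹).mulVec (Pi.single 0 1)) 0) ^ (-(1 : ℝ) / 2)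
      else 0


/-! Column `i` of the Vecchia factor is supported on `c̄(i)`, which contains `i` and otherwise only
indices below `i`, so the factor is upper triangular. Its diagonal entry is `u₀ · u₀^(-1/2)` with
`u₀ = (Σ_{c̄(i),c̄(i)})⁻¹₀₀`, a diagonal entry of the inverse of a principal submatrix of `Σ`,
hence positive. An upper triangular matrix with positive diagonal is invertible, so `V Vᵀ` and
its inverse are positive definite. -/

section VecchiaFactor

variable {n : ℕ} (S : Matrix (Fin n) (Fin n) ℝ) {k : Fin n → ℕ}
  {ι : (i : Fin n) → Fin (k i + 1) → Fin n}

theorem vecchiaFactor_apply_of_forall_ne {j i : Fin n} (hj : ∀ m, ι i m ≠ j) :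
    vecchiaFactor S k ι j i = 0 :=
  Finset.sum_eq_zero fun m _ => if_neg (hj m)

theorem vecchiaFactor_apply_self {i : Fin n} (hinj : Function.Injective (ι i)) (h0 : ι i 0 = i) :
    vecchiaFactor S k ι i i =
      (S.submatrix (ι i) (ι i))⁻¹ 0 0 * ((S.submatrix (ι i) (ι i))⁻¹ 0 0) ^ (-(1 : ℝ) / 2) := by
  rw [vecchiaFactor, Finset.sum_eq_single_of_mem 0 (Finset.mem_univ _)
    fun m _ hm => if_neg fun h => hm (hinj (h.trans h0.symm)), if_pos h0, mulVec_single_one]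
  rfl

theorem vecchiaFactor_isUpperTriangular (h0 : ∀ i, ι i 0 = i)
    (hlt : ∀ (i : Fin n) (m : Fin (k i + 1)), m ≠ 0 → ι i m < i) :
    (vecchiaFactor S k ι).IsUpperTriangular := by
  intro j i hij
  refine vecchiaFactor_apply_of_forall_ne S fun m hm => ?_
  have : ι i m ≤ i := by
    rcases eq_or_ne m 0 with rfl | hm0
    · exact (h0 i).le
    · exact (hlt i m hm0).le
  exact (hm ▸ this).not_gt hij

theorem vecchiaFactor_diag_pos (hS : S.PosDef) {i : Fin n} (hinj : Function.Injective (ι i))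
    (h0 : ι i 0 = i) : 0 < vecchiaFactor S k ι i i := by
  have hu : 0 < (S.submatrix (ι i) (ι i))⁻¹ 0 0 := (hS.submatrix hinj).inv.diag_pos
  rw [vecchiaFactor_apply_self S hinj h0]
  exact mul_pos hu (Real.rpow_pos_of_pos hu _)

end VecchiaFactor

theorem Matrix.IsUpperTriangular.isUnit_of_diag_ne_zero {m K : Type*} [Fintype m] [LinearOrder m]
    [Field K] {V : Matrix m m K} (hV : V.IsUpperTriangular) (hdiag : ∀ i, V i i ≠ 0) :
    IsUnit V :=
  (isUnit_iff_isUnit_det V).2 <| by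
    rw [det_of_isUpperTriangular hV]
    exact (Finset.prod_ne_zero_iff.2 fun i _ => hdiag i).isUnit

/-- For `Σ` symmetric positive definite and conditioning sets `c(i) ⊆ {1,…,i−1}`
(so `ι i` is injective, `ι i 0 = i`, and all other elements are `< i`), the Vecchia
factor `V` is upper triangular with positive diagonal, and `Σ_V := (V Vᵀ)⁻¹` is
symmetric positive definite. -/
theorem vecchia_valid {n : ℕ} (S : Matrix (Fin n) (Fin n) ℝ) (hS : S.PosDef)
    (k : Fin n → ℕ) (ι : (i : Fin n) → Fin (k i + 1) → Fin n)
    (hinj : ∀ i, Function.Injective (ι i)) (h0 : ∀ i, ι i 0 = i)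
    (hlt : ∀ (i : Fin n) (m : Fin (k i + 1)), m ≠ 0 → ι i m < i) :
    (∀ j i : Fin n, i < j → vecchiaFactor S k ι j i = 0) ∧
    (∀ i : Fin n, 0 < vecchiaFactor S k ι i i) ∧
    ((vecchiaFactor S k ι * (vecchiaFactor S k ι)ᵀ)⁻¹).PosDef := by
  set V := vecchiaFactor S k ι
  have htri : V.IsUpperTriangular := vecchiaFactor_isUpperTriangular S h0 hlt
  have hdiag : ∀ i, 0 < V i i := fun i => vecchiaFactor_diag_pos S hS (hinj i) (h0 i)
  have hV : IsUnit V := htri.isUnit_of_diag_ne_zero fun i => (hdiag i).ne'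
  exact ⟨htri, hdiag, (PosDef.mul_conjTranspose_self V (vecMul_injective_iff_isUnit.2 hV)).inv⟩
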